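/- Conversely to the projection lemma (Projection Lemma of Mazurkiewicz traces): two words u, v ∈ Σ* are trace equivalent if and only if for every pair (a,b) ∈ D, the projections of u and v onto {a,b} are equal. -/

import Mathlib

/-- One-step swap of adjacent independent letters. -/
def Swap {α : Type*} (D : α → α → Prop) (u v : List α) : Prop :=
  ∃ (p q : List α) (a b : α), ¬ D a b ∧ u = p ++ [a, b] ++ q ∧ v = p ++ [b, a] ++ q

/-- Trace equivalence: the equivalence closure of the swap relation. -/
def TraceEquiv {α : Type*} (D : α → α → Prop) : List α → List α → Prop :=
  Relation.EqvGen (Swap D)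

/-!
A swap exchanges two independent letters, which cannot both lie in a set `P` of pairwise
dependent letters; so swaps, hence trace equivalence, preserve the projection onto such a `P`,
in particular (`D` being reflexive and symmetric) onto every dependent pair `{a, b}`.

Conversely, suppose all projections onto dependent pairs agree and `u = x :: u'`. Projecting
onto `{x}` shows `x ∈ v`; write `v = p ++ x :: s` with `x ∉ p`. If some `y ∈ p` depended on `x`,
the projection of `v` onto `{x, y}` would start with `y` while that of `u` starts with `x`. So `x`
commutes past `p`, `v ∼ x :: (p ++ s)`, and the projections of `u'` and `p ++ s` agree, so
induction on `u` concludes.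
-/

namespace List

variable {α : Type*} {P : α → Prop} [DecidablePred P]

theorem mem_iff_mem_of_filter_eq {x : α} {u v : List α}
    (h : u.filter (P ·) = v.filter (P ·)) (hx : P x) : x ∈ u ↔ x ∈ v := by
  simpa [hx] using congrArg (x ∈ ·) h

theorem filter_eq_of_filter_cons_eq {x : α} {u v : List α}
    (h : (x :: u).filter (P ·) = (x :: v).filter (P ·)) : u.filter (P ·) = v.filter (P ·) := by
  by_cases hx : P x <;> simpa [filter_cons, hx] using h

theorem filter_cons_append_comm {x : α} {p : List α} (s : List α)
    (h : ∀ y ∈ p, P x → ¬ P y) : (x :: (p ++ s)).filter (P ·) = (p ++ x :: s).filter (P ·) := by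
  by_cases hx : P x
  · have hp : p.filter (P ·) = [] := filter_eq_nil_iff.mpr fun y hy => by simpa using h y hy hx
    simp [filter_append, hx, hp]
  · simp [filter_append, hx]

theorem filter_eq_nil_of_filter_cons_eq {x : α} {u p s : List α}
    (h : (x :: u).filter (P ·) = (p ++ x :: s).filter (P ·)) (hx : P x) (hxp : x ∉ p) : p.filter (P ·) = [] := by
  rw [filter_cons_of_pos (by simpa using hx), filter_append] at h
  cases hp : p.filter (P ·) with
  | nil => rfl
  | cons z t =>
    rw [hp, cons_append, cons.injEq] at h
    have hz : z ∈ p.filter (P ·) := hp ▸ mem_cons_self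
    exact absurd (mem_of_mem_filter hz) (h.1 ▸ hxp)

end List

section Traces

variable {α : Type*} {D : α → α → Prop}

theorem dep_of_mem_pair (hrefl : ∀ a, D a a) (hsymm : ∀ a b, D a b → D b a) {a b c d : α}
    (hab : D a b) (hc : c = a ∨ c = b) (hd : d = a ∨ d = b) : D c d := by
  rcases hc with rfl | rfl <;> rcases hd with rfl | rfl
  exacts [hrefl _, hab, hsymm _ _ hab, hrefl _]

theorem Swap.cons (x : α) {u v : List α} : Swap D u v → Swap D (x :: u) (x :: v)
  | ⟨p, q, a, b, hab, hu, hv⟩ => ⟨x :: p, q, a, b, hab, by simp [hu], by simp [hv]⟩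

theorem Swap.filter_eq {P : α → Prop} [DecidablePred P] (hP : ∀ c d, P c → P d → D c d)
    {u v : List α} : Swap D u v → u.filter (P ·) = v.filter (P ·)
  | ⟨p, q, a, b, hab, hu, hv⟩ => by
    have hba : ∀ y ∈ [b], P a → ¬ P y := by
      simpa using fun ha hb => hab (hP a b ha hb)
    simpa [hu, hv, List.filter_append] using List.filter_cons_append_comm q hba

theorem TraceEquiv.cons (x : α) {u v : List α} (h : TraceEquiv D u v) :
    TraceEquiv D (x :: u) (x :: v) := by
  induction h with
  | rel _ _ h => exact .rel _ _ (h.cons x)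
  | refl => exact .refl _
  | symm _ _ _ ih => exact .symm _ _ ih
  | trans _ _ _ _ _ ih₁ ih₂ => exact .trans _ _ _ ih₁ ih₂

theorem TraceEquiv.filter_eq {P : α → Prop} [DecidablePred P] (hP : ∀ c d, P c → P d → D c d)
    {u v : List α} (h : TraceEquiv D u v) : u.filter (P ·) = v.filter (P ·) :=
  (InvImage.equivalence _ _ eq_equivalence).eqvGen_iff.mp
    (h.mono fun _ _ hs => Swap.filter_eq hP hs)

theorem traceEquiv_cons_append {x : α} (s : List α) :
    ∀ {p : List α}, (∀ y ∈ p, ¬ D x y) → TraceEquiv D (x :: (p ++ s)) (p ++ x :: s)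
  | [], _ => .refl _
  | y :: p, h =>
    have hxy : Swap D (x :: y :: (p ++ s)) (y :: x :: (p ++ s)) :=
      ⟨[], p ++ s, x, y, h y List.mem_cons_self, rfl, rfl⟩
    .trans _ _ _ (.rel _ _ hxy)
      ((traceEquiv_cons_append s fun z hz => h z (List.mem_cons_of_mem y hz)).cons y)

theorem traceEquiv_of_forall_filter_pair_eq [DecidableEq α] (hrefl : ∀ a, D a a)
    (hsymm : ∀ a b, D a b → D b a) {u v : List α}
    (h : ∀ a b, D a b →
      u.filter (fun c => c = a ∨ c = b) = v.filter (fun c => c = a ∨ c = b)) :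
    TraceEquiv D u v := by
  induction u generalizing v with
  | nil =>
    obtain rfl : v = [] := List.eq_nil_iff_forall_not_mem.mpr fun y hy =>
      List.not_mem_nil ((List.mem_iff_mem_of_filter_eq (h y y (hrefl y)) (Or.inl rfl)).mpr hy)
    exact .refl _
  | cons x u ih =>
    have hxv : x ∈ v :=
      (List.mem_iff_mem_of_filter_eq (h x x (hrefl x)) (Or.inl rfl)).mp List.mem_cons_self
    obtain ⟨p, s, rfl, hxp⟩ := List.eq_append_cons_of_mem hxv
    have hindep : ∀ y ∈ p, ¬ D x y := fun y hy hxy =>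
      have hp := List.filter_eq_nil_of_filter_cons_eq (h x y hxy) (Or.inl rfl) hxp
      List.filter_eq_nil_iff.mp hp y hy (by simp)
    have hproj : ∀ a b, D a b → u.filter (fun c => c = a ∨ c = b) =
        (p ++ s).filter (fun c => c = a ∨ c = b) := fun a b hab =>
      List.filter_eq_of_filter_cons_eq <| (h a b hab).trans
        (List.filter_cons_append_comm s fun y hy hx hy' =>
          hindep y hy (dep_of_mem_pair hrefl hsymm hab hx hy')).symm
    exact .trans _ _ _ ((ih hproj).cons x) (traceEquiv_cons_append s hindep)

end Traces

theorem traceEquiv_iff_projections_general {α : Type*} [DecidableEq α]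
    (D : α → α → Prop) (hrefl : ∀ a, D a a) (hsymm : ∀ a b, D a b → D b a)
    (u v : List α) :
    TraceEquiv D u v ↔
      ∀ a b : α, D a b →
        u.filter (fun c => c = a ∨ c = b) = v.filter (fun c => c = a ∨ c = b) :=
  ⟨fun h _ _ hab => h.filter_eq fun _ _ => dep_of_mem_pair hrefl hsymm hab,
    traceEquiv_of_forall_filter_pair_eq hrefl hsymm⟩

/-- Projection Lemma of Mazurkiewicz traces. -/
theorem traceEquiv_iff_projections {α : Type*} [Fintype α] [DecidableEq α]
    (D : α → α → Prop) (hrefl : ∀ a, D a a) (hsymm : ∀ a b, D a b → D b a)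
    (u v : List α) :
    TraceEquiv D u v ↔
      ∀ a b : α, D a b →
        u.filter (fun c => c = a ∨ c = b) = v.filter (fun c => c = a ∨ c = b) :=
  traceEquiv_iff_projections_general D hrefl hsymm u v
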